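/- Let n ≥ 4 be an even integer, k ≥ 1, and let G be a simple graph on vertex set {1,…,n} whose edge set is invariant under the map u ↦ u' on both endpoints (i.e., u is adjacent to v if and only if u' is adjacent to v'). Let Q = {0} ∪ {q_{ij}^{uu} : 1 ≤ u ≤ n, 1 ≤ i < j ≤ k} ∪ {q_{ij}^{uv} : 1 ≤ i < j ≤ k, u,v ∈ {1,…,n}, u adjacent to v in G}. Then the following are equivalent: (1) there exist two affine hyperplanes H₁, H₂ in ℝ^{2k}, with no point of P ∪ Q on H₁ ∪ H₂, such that for every p ∈ P and q ∈ Q the segment between p and q meets H₁ ∪ H₂; (2) G has an independent set of size k, i.e., k pairwise distinct, pairwise non-adjacent vertices. -/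

import Mathlib

open scoped RealInnerProductSpace
open Real

/-- The scaffolding point `p_{iu}` in `ℝ^{2k}`: its `i`-th coordinate pair is
`(cos((u−1)·2π/n), sin((u−1)·2π/n))` and its other coordinates are `0`. -/
noncomputable def scafPt (n k : ℕ) (i : Fin k) (u : ℕ) :
    EuclideanSpace ℝ (Fin (2 * k)) :=
  (WithLp.equiv 2 (Fin (2 * k) → ℝ)).symm fun idx =>
    if (idx : ℕ) = 2 * (i : ℕ) then Real.cos (((u : ℝ) - 1) * (2 * Real.pi) / n)
    else if (idx : ℕ) = 2 * (i : ℕ) + 1 then Real.sin (((u : ℝ) - 1) * (2 * Real.pi) / n)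
    else 0

/-- The scaffolding point set `P = {p_{iu} : 1 ≤ i ≤ k, 1 ≤ u ≤ n}`. -/
noncomputable def scafSet (n k : ℕ) : Set (EuclideanSpace ℝ (Fin (2 * k))) :=
  {x | ∃ i : Fin k, ∃ u ∈ Finset.Icc 1 n, x = scafPt n k i u}

/-- The antipodal partner `u' ∈ {1,…,n}` of `u ∈ {1,…,n}`: the unique element of
`{1,…,n}` congruent to `u + n/2` modulo `n`. -/
def antip (n u : ℕ) : ℕ := (u - 1 + n / 2) % n + 1

/-- The almost antipodal partner `ū ∈ {1,…,n}` of `u ∈ {1,…,n}`: the unique element of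
`{1,…,n}` congruent to `u + n/2 + 1` modulo `n`. -/
def almostAntip (n u : ℕ) : ℕ := (u - 1 + n / 2 + 1) % n + 1

/-- The half of the scaffolding set selected by a tuple `(u_1,…,u_k) ∈ {1,…,n}^k`:
`P(u_1,…,u_k) = {p_{it} : 1 ≤ i ≤ k, t ∈ {1,…,n}, t ≡ u_i − s (mod n)` for some
`s ∈ {0,…,n/2−1}}`. -/
noncomputable def scafHalf (n k : ℕ) (U : Fin k → ℕ) :
    Set (EuclideanSpace ℝ (Fin (2 * k))) :=
  {x | ∃ i : Fin k, ∃ t ∈ Finset.Icc 1 n,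
    (∃ s < n / 2, t + s ≡ U i [MOD n]) ∧ x = scafPt n k i t}

/-- The affine hyperplane `{x : ⟪a, x⟫ = b}`. -/
def hyp {k : ℕ} (a : EuclideanSpace ℝ (Fin (2 * k))) (b : ℝ) :
    Set (EuclideanSpace ℝ (Fin (2 * k))) := {x | ⟪a, x⟫ = b}

/-- The constraint point `q_{ij}^{uv}`: the centroid of `p_{iu}, p_{iū}, p_{jv}, p_{jv̄}`. -/
noncomputable def constrPt (n k : ℕ) (i j : Fin k) (u v : ℕ) :
    EuclideanSpace ℝ (Fin (2 * k)) :=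
  (1 / 4 : ℝ) • (scafPt n k i u + scafPt n k i (almostAntip n u)
    + scafPt n k j v + scafPt n k j (almostAntip n v))

/-- The constraint set `Q`: the origin together with the points `q_{ij}^{uu}` for
`u ∈ {1,…,n}`, `i < j`, and the points `q_{ij}^{uv}` for `i < j` and `u, v` adjacent. -/
noncomputable def constrSet (n k : ℕ) (Adj : ℕ → ℕ → Prop) :
    Set (EuclideanSpace ℝ (Fin (2 * k))) :=
  insert 0
    ({x | ∃ i j : Fin k, i < j ∧ ∃ u ∈ Finset.Icc 1 n, x = constrPt n k i j u u}
      ∪ {x | ∃ i j : Fin k, i < j ∧ ∃ u v : ℕ, Adj u v ∧ x = constrPt n k i j u v})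

/-!
Normalise the hyperplanes to `⟪aᵣ, x⟫ = bᵣ` with `bᵣ > 0`, which is possible because `0 ∈ Q`.
The segment from `p ∈ P` to `0` then puts every `p` strictly beyond some hyperplane, and since
`p_{iu'} = -p_{iu}`, exactly one of `p_{iu}`, `p_{iu'}` lies beyond `H₁`. Walking once around the
`i`-th circle shows that some almost antipodal pair `p_{iu}, p_{iū}` lies beyond `H₁`. Choosing such
a `u = f i` on every circle gives an independent set: otherwise `q_{ij}^{f i, f j} ∈ Q` would lie on
the same side of both hyperplanes as `p_{i, f i}`.

Conversely, for an independent set `f` the slab `|⟪a, x⟫| < b` with `a = indepNormal n k f`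
separates: `|⟪a, p⟫| ≥ sin (π/n)` on `P`, while `|⟪a, q⟫| ≤ sin (π/n) (1 + cos (2π/n)) / 2` on `Q`.
The only constraint points that could violate the latter bound are `q_{ij}^{f i, f j}` and
`q_{ij}^{(f i)', (f j)'}`, which independence and the invariance of `G` under `u ↦ u'` keep out
of `Q`.
-/

lemma cos_two_pi_mul_div_le (N : ℕ) (m : ℤ) (hm : ¬(N : ℤ) ∣ m) :
    Real.cos (2 * π * m / N) ≤ Real.cos (2 * π / N) := by
  rcases Nat.eq_zero_or_pos N with rfl | hN
  · simp
  set r := m.bmod N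
  have hr : 1 ≤ |r| := Int.one_le_abs fun h => hm (Int.dvd_of_bmod_eq_zero h)
  have hr_abs : 2 * |r| ≤ N := by
    have := Int.le_bmod (x := m) hN
    have := Int.bmod_lt (x := m) hN
    rw [abs_eq_max_neg]; omega
  have hperiod : 2 * π * m / N = 2 * π * r / N + (m.bdiv N : ℤ) * (2 * π) := by
    have hm : (m : ℝ) = r + N * m.bdiv N := by
      exact_mod_cast (by have := Int.bmod_eq_self_sub_mul_bdiv m N; linarith)
    rw [hm]
    field_simp
  have hN' : (0 : ℝ) < N := by exact_mod_cast hN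
  have hr' : (1 : ℝ) ≤ |(r : ℝ)| := by exact_mod_cast hr
  have hr_abs' : 2 * |(r : ℝ)| ≤ N := by exact_mod_cast hr_abs
  rw [hperiod, Real.cos_add_int_mul_two_pi, ← Real.cos_abs, abs_div, abs_mul,
    abs_of_pos Real.two_pi_pos, Nat.abs_cast]
  apply Real.cos_le_cos_of_nonneg_of_le_pi (by positivity)
  · rw [div_le_iff₀ hN']; nlinarith [Real.pi_pos]
  · exact div_le_div_of_nonneg_right (by nlinarith [Real.pi_pos]) hN'.le

lemma abs_sin_pi_div_le (N : ℕ) (m : ℤ) (hm : ¬(N : ℤ) ∣ m) :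
    |Real.sin (π / N)| ≤ |Real.sin (π * m / N)| := by
  have h := cos_two_pi_mul_div_le N m hm
  rw [← sq_le_sq, Real.sin_sq_eq_half_sub, Real.sin_sq_eq_half_sub]
  rw [show 2 * π * m / N = 2 * (π * m / N) by ring, show 2 * π / N = 2 * (π / N) by ring] at h
  linarith

lemma sin_pi_div_nonneg {N : ℕ} (hN : 0 < N) : 0 ≤ Real.sin (π / N) :=
  Real.sin_nonneg_of_nonneg_of_le_pi (by positivity)
    (div_le_self Real.pi_pos.le (by exact_mod_cast hN))

def SeparatedBy {k : ℕ} (P Q : Set (EuclideanSpace ℝ (Fin (2 * k))))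
    (a₁ a₂ : EuclideanSpace ℝ (Fin (2 * k))) (b₁ b₂ : ℝ) : Prop :=
  (∀ x ∈ P ∪ Q, x ∉ hyp a₁ b₁ ∪ hyp a₂ b₂) ∧
    ∀ p ∈ P, ∀ q ∈ Q, (segment ℝ p q ∩ (hyp a₁ b₁ ∪ hyp a₂ b₂)).Nonempty

section Separation

variable {k : ℕ} {P Q : Set (EuclideanSpace ℝ (Fin (2 * k)))}
  {a a₁ a₂ p q : EuclideanSpace ℝ (Fin (2 * k))} {b b₁ b₂ : ℝ}

lemma hyp_neg : hyp (-a) (-b) = hyp a b := by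
  ext x
  simp [hyp, inner_neg_left]

lemma exists_pos_hyp_eq (hb : b ≠ 0) : ∃ a' b', 0 < b' ∧ hyp a' b' = hyp a b := by
  rcases hb.lt_or_gt with hb | hb
  · exact ⟨-a, -b, neg_pos.mpr hb, hyp_neg⟩
  · exact ⟨a, b, hb, rfl⟩

lemma segment_inter_hyp_nonempty_iff :
    (segment ℝ p q ∩ hyp a b).Nonempty ↔ b ∈ Set.uIcc ⟪a, p⟫ ⟪a, q⟫ := by
  rw [← segment_eq_uIcc]
  have := image_segment ℝ (innerₛₗ ℝ a).toAffineMap p q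
  simp only [LinearMap.coe_toAffineMap, innerₛₗ_apply_apply] at this
  rw [← this]
  rfl

lemma lt_inner_of_segment_zero (hb : 0 < b) (hp : ⟪a, p⟫ ≠ b)
    (h : (segment ℝ p 0 ∩ hyp a b).Nonempty) : b < ⟪a, p⟫ := by
  rw [segment_inter_hyp_nonempty_iff, inner_zero_right, Set.mem_uIcc] at h
  rcases h with h | h
  · linarith
  · exact lt_of_le_of_ne h.2 hp.symm

namespace SeparatedBy

lemma inner_ne (hS : SeparatedBy P Q a₁ a₂ b₁ b₂) (hp : p ∈ P) :
    ⟪a₁, p⟫ ≠ b₁ ∧ ⟪a₂, p⟫ ≠ b₂ := by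
  simpa [hyp, not_or] using hS.1 p (Or.inl hp)

lemma lt_inner_or_lt_inner (hS : SeparatedBy P Q a₁ a₂ b₁ b₂) (hb₁ : 0 < b₁) (hb₂ : 0 < b₂)
    (h0 : 0 ∈ Q) (hp : p ∈ P) : b₁ < ⟪a₁, p⟫ ∨ b₂ < ⟪a₂, p⟫ := by
  have hoff := hS.inner_ne hp
  rcases Set.union_nonempty.mp (Set.inter_union_distrib_left _ _ _ ▸ hS.2 p hp 0 h0) with h | h
  · exact Or.inl (lt_inner_of_segment_zero hb₁ hoff.1 h)
  · exact Or.inr (lt_inner_of_segment_zero hb₂ hoff.2 h)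

-- Since `b₁, b₂ > 0`, of the antipodal points `p` and `-p` at most one lies beyond each
-- hyperplane, while each lies beyond some hyperplane.
lemma lt_inner_neg_iff (hS : SeparatedBy P Q a₁ a₂ b₁ b₂) (hb₁ : 0 < b₁) (hb₂ : 0 < b₂)
    (h0 : 0 ∈ Q) (hp : p ∈ P) (hnp : -p ∈ P) : b₁ < ⟪a₁, -p⟫ ↔ ¬b₁ < ⟪a₁, p⟫ := by
  have h := hS.lt_inner_or_lt_inner hb₁ hb₂ h0 hp
  have hn := hS.lt_inner_or_lt_inner hb₁ hb₂ h0 hnp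
  simp only [inner_neg_right] at hn ⊢
  constructor
  · intro h' h''; linarith
  · intro h'; rcases h with h | h <;> rcases hn with hn | hn <;> linarith

lemma inner_lt_of_lt_inner (hS : SeparatedBy P Q a₁ a₂ b₁ b₂) (hb₁ : 0 < b₁) (hb₂ : 0 < b₂)
    (h0 : 0 ∈ Q) (hp : p ∈ P) (hnp : -p ∈ P) (h : b₁ < ⟪a₁, p⟫) : ⟪a₂, p⟫ < b₂ := by
  have hn := hS.lt_inner_or_lt_inner hb₁ hb₂ h0 hnp
  rw [inner_neg_right, inner_neg_right] at hn
  refine lt_of_le_of_ne ?_ (hS.inner_ne hp).2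
  rcases hn with hn | hn <;> linarith

lemma notMem_of_lt_inner_of_inner_lt (hS : SeparatedBy P Q a₁ a₂ b₁ b₂) (hp : p ∈ P)
    (hp₁ : b₁ < ⟪a₁, p⟫) (hq₁ : b₁ < ⟪a₁, q⟫) (hp₂ : ⟪a₂, p⟫ < b₂) (hq₂ : ⟪a₂, q⟫ < b₂) :
    q ∉ Q := by
  intro hq
  rcases Set.union_nonempty.mp (Set.inter_union_distrib_left _ _ _ ▸ hS.2 p hp q hq) with h | h
  all_goals
    rw [segment_inter_hyp_nonempty_iff, Set.mem_uIcc] at h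
    rcases h with h | h <;> linarith [h.1, h.2]

lemma exists_pos (hS : SeparatedBy P Q a₁ a₂ b₁ b₂) (h0 : 0 ∈ Q) :
    ∃ a₁' a₂' b₁' b₂', 0 < b₁' ∧ 0 < b₂' ∧ SeparatedBy P Q a₁' a₂' b₁' b₂' := by
  have hoff := hS.1 0 (Or.inr h0)
  have hne : ∀ a b, (0 : EuclideanSpace ℝ (Fin (2 * k))) ∉ hyp a b → b ≠ 0 := by
    rintro a b h rfl
    exact h (inner_zero_right a)
  obtain ⟨a₁', b₁', hb₁, h₁⟩ := exists_pos_hyp_eq (hne a₁ b₁ fun h => hoff (Or.inl h))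
  obtain ⟨a₂', b₂', hb₂, h₂⟩ := exists_pos_hyp_eq (hne a₂ b₂ fun h => hoff (Or.inr h))
  refine ⟨a₁', a₂', b₁', b₂', hb₁, hb₂, ?_⟩
  rwa [SeparatedBy, h₁, h₂]

end SeparatedBy

lemma separatedBy_slab (hb : 0 ≤ b) (hP : ∀ p ∈ P, b < |⟪a, p⟫|) (hQ : ∀ q ∈ Q, |⟪a, q⟫| < b) :
    SeparatedBy P Q a (-a) b b := by
  have hoff : ∀ x, b ≠ |⟪a, x⟫| → x ∉ hyp a b ∪ hyp (-a) b := by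
    rintro x hx (h | h)
    · exact hx (by rw [show ⟪a, x⟫ = b from h, abs_of_nonneg hb])
    · have h : -⟪a, x⟫ = b := (inner_neg_left a x).symm.trans h
      exact hx (by rw [← neg_neg ⟪a, x⟫, h, abs_neg, abs_of_nonneg hb])
  refine ⟨fun x hx => hoff x ?_, fun p hp q hq => ?_⟩
  · rcases hx with hx | hx
    · exact (hP x hx).ne
    · exact (hQ x hx).ne'
  have hp := hP p hp
  have hq := abs_lt.mp (hQ q hq)
  rw [Set.inter_union_distrib_left, Set.union_nonempty, segment_inter_hyp_nonempty_iff,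
    segment_inter_hyp_nonempty_iff, Set.mem_uIcc, Set.mem_uIcc, inner_neg_left, inner_neg_left]
  rcases le_abs'.mp hp.le with h | h
  · right; right; constructor <;> linarith
  · left; right; constructor <;> linarith

end Separation

lemma antip_mem {n : ℕ} (hn : 0 < n) (u : ℕ) : antip n u ∈ Finset.Icc 1 n := by
  have := Nat.mod_lt (u - 1 + n / 2) hn
  simp only [antip, Finset.mem_Icc]
  omega

lemma almostAntip_mem {n : ℕ} (hn : 0 < n) (u : ℕ) : almostAntip n u ∈ Finset.Icc 1 n := by
  have := Nat.mod_lt (u - 1 + n / 2 + 1) hn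
  simp only [almostAntip, Finset.mem_Icc]
  omega

lemma antip_almostAntip {n u : ℕ} (hneven : Even n) (hu : 1 ≤ u) :
    antip n (almostAntip n u) = u % n + 1 := by
  obtain ⟨m, rfl⟩ := hneven
  have hm : (m + m) / 2 = m := by omega
  rw [antip, almostAntip, hm, Nat.add_sub_cancel, Nat.mod_add_mod,
    show u - 1 + m + 1 + m = u + (m + m) by omega, Nat.add_mod_right]

lemma shift_of_succ_closed {n : ℕ} (hn : 0 < n) {S : ℕ → Prop}
    (hstep : ∀ u ∈ Finset.Icc 1 n, S u → S (u % n + 1)) {u : ℕ} (hu : u ∈ Finset.Icc 1 n)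
    (hSu : S u) (m : ℕ) : S ((u - 1 + m) % n + 1) := by
  rw [Finset.mem_Icc] at hu
  induction m with
  | zero => rwa [add_zero, Nat.mod_eq_of_lt (by omega), Nat.sub_add_cancel hu.1]
  | succ m ih =>
    have hmem : (u - 1 + m) % n + 1 ∈ Finset.Icc 1 n := by
      have := Nat.mod_lt (u - 1 + m) hn
      rw [Finset.mem_Icc]; omega
    simpa only [Nat.add_sub_cancel, Nat.mod_add_mod, ← add_assoc] using hstep _ hmem ih

-- Going around a circle in `n` steps: if no almost antipodal pair lies in `S`, then
-- `S u → S (ū') = S (u + 1)`, so `S` would contain `u + n/2 = u'` along with `u`.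
lemma exists_almostAntip_pair {n : ℕ} (hn : 0 < n) (hneven : Even n) (S : ℕ → Prop)
    (hS : ∀ u ∈ Finset.Icc 1 n, S (antip n u) ↔ ¬S u) :
    ∃ u ∈ Finset.Icc 1 n, S u ∧ S (almostAntip n u) := by
  by_contra! h
  have hstep : ∀ u ∈ Finset.Icc 1 n, S u → S (u % n + 1) := fun u hu hSu => by
    rw [← antip_almostAntip hneven (Finset.mem_Icc.mp hu).1]
    exact (hS _ (almostAntip_mem hn u)).2 (h u hu hSu)
  have h1 : 1 ∈ Finset.Icc 1 n := Finset.mem_Icc.mpr ⟨le_rfl, hn⟩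
  obtain ⟨u, hu, hSu⟩ : ∃ u ∈ Finset.Icc 1 n, S u := by
    by_cases hS1 : S 1
    · exact ⟨1, h1, hS1⟩
    · exact ⟨antip n 1, antip_mem hn 1, (hS 1 h1).2 hS1⟩
  exact (hS u hu).1 (shift_of_succ_closed hn hstep hu hSu (n / 2)) hSu

lemma antip_antip {n u : ℕ} (hneven : Even n) (hu : u ∈ Finset.Icc 1 n) :
    antip n (antip n u) = u := by
  obtain ⟨m, rfl⟩ := hneven
  rw [Finset.mem_Icc] at hu
  have hm : (m + m) / 2 = m := by omega
  rw [antip, antip, hm, Nat.add_sub_cancel, Nat.mod_add_mod,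
    show u - 1 + m + m = u - 1 + (m + m) by omega, Nat.add_mod_right, Nat.mod_eq_of_lt (by omega)]
  omega

noncomputable def scafAngle (n u : ℕ) : ℝ := ((u : ℝ) - 1) * (2 * π) / n

lemma scafPt_eq (n k : ℕ) (i : Fin k) (u : ℕ) :
    scafPt n k i u =
      Real.cos (scafAngle n u) • EuclideanSpace.single ⟨2 * i, by omega⟩ 1
        + Real.sin (scafAngle n u) • EuclideanSpace.single ⟨2 * i + 1, by omega⟩ 1 := by
  ext idx
  by_cases h₁ : (idx : ℕ) = 2 * i <;> by_cases h₂ : (idx : ℕ) = 2 * i + 1 <;>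
    simp [scafPt, scafAngle, PiLp.single_apply, Fin.ext_iff, h₁, h₂]

lemma inner_scafPt (n k : ℕ) (x : EuclideanSpace ℝ (Fin (2 * k))) (i : Fin k) (u : ℕ) :
    ⟪x, scafPt n k i u⟫ =
      x ⟨2 * i, by omega⟩ * Real.cos (scafAngle n u)
        + x ⟨2 * i + 1, by omega⟩ * Real.sin (scafAngle n u) := by
  rw [scafPt_eq, inner_add_right, real_inner_smul_right, real_inner_smul_right,
    EuclideanSpace.inner_single_right, EuclideanSpace.inner_single_right]
  simp only [one_mul, conj_trivial]
  ring

lemma scafAngle_shift {n u : ℕ} (hn : 0 < n) (hu : 1 ≤ u) (s : ℕ) :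
    ∃ c : ℤ, scafAngle n ((u - 1 + s) % n + 1) = scafAngle n u + s * (2 * π) / n + c * (2 * π) := by
  have hdiv := Nat.mod_add_div (u - 1 + s) n
  generalize (u - 1 + s) % n = r, (u - 1 + s) / n = q at hdiv
  refine ⟨-q, ?_⟩
  have hr : (r : ℝ) = u - 1 + s - n * q := by
    have : ((r + n * q : ℕ) : ℝ) = (u - 1 + s : ℕ) := congrArg _ hdiv
    push_cast [Nat.cast_sub hu] at this
    linarith
  have hn' : (n : ℝ) ≠ 0 := by positivity
  simp only [scafAngle, Nat.cast_add, Nat.cast_one, add_sub_cancel_right, hr]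
  field_simp
  push_cast
  ring

lemma scafAngle_antip {n u : ℕ} (hn : 0 < n) (hneven : Even n) (hu : 1 ≤ u) :
    ∃ c : ℤ, scafAngle n (antip n u) = scafAngle n u + π + c * (2 * π) := by
  obtain ⟨c, hc⟩ := scafAngle_shift hn hu (n / 2)
  refine ⟨c, ?_⟩
  rw [antip, hc, Nat.cast_div_charZero (even_iff_two_dvd.mp hneven)]
  field_simp
  ring

lemma scafAngle_almostAntip {n u : ℕ} (hn : 0 < n) (hneven : Even n) (hu : 1 ≤ u) :
    ∃ c : ℤ, scafAngle n (almostAntip n u) = scafAngle n u + π + 2 * π / n + c * (2 * π) := by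
  obtain ⟨c, hc⟩ := scafAngle_shift hn hu (n / 2 + 1)
  refine ⟨c, ?_⟩
  rw [almostAntip, add_assoc (u - 1), hc, Nat.cast_add,
    Nat.cast_div_charZero (even_iff_two_dvd.mp hneven)]
  field_simp
  ring

lemma scafPt_antip {n : ℕ} (k : ℕ) (hn : 0 < n) (hneven : Even n) (i : Fin k) {u : ℕ}
    (hu : 1 ≤ u) : scafPt n k i (antip n u) = -scafPt n k i u := by
  obtain ⟨c, hc⟩ := scafAngle_antip hn hneven hu
  have hcos : Real.cos (scafAngle n (antip n u)) = -Real.cos (scafAngle n u) := by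
    rw [hc, Real.cos_add_int_mul_two_pi, Real.cos_add_pi]
  have hsin : Real.sin (scafAngle n (antip n u)) = -Real.sin (scafAngle n u) := by
    rw [hc, Real.sin_add_int_mul_two_pi, Real.sin_add_pi]
  rw [scafPt_eq, scafPt_eq, hcos, hsin, neg_smul, neg_smul, neg_add]

lemma cos_sub_scafAngle_antip {n : ℕ} (hn : 0 < n) (hneven : Even n) (u : ℕ) {w : ℕ}
    (hw : 1 ≤ w) :
    Real.cos (scafAngle n u - scafAngle n (antip n w))
      = -Real.cos (scafAngle n u - scafAngle n w) := by
  obtain ⟨c, hc⟩ := scafAngle_antip hn hneven hw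
  rw [hc, show scafAngle n u - (scafAngle n w + π + c * (2 * π))
    = scafAngle n u - scafAngle n w - π - c * (2 * π) by ring,
    Real.cos_sub_int_mul_two_pi, Real.cos_sub_pi]

lemma cos_sub_scafAngle_le {n u w : ℕ} (hu : u ∈ Finset.Icc 1 n) (hw : w ∈ Finset.Icc 1 n)
    (huw : u ≠ w) : Real.cos (scafAngle n u - scafAngle n w) ≤ Real.cos (2 * π / n) := by
  rw [Finset.mem_Icc] at hu hw
  have hndvd : ¬(n : ℤ) ∣ (u - w : ℤ) := fun h => huw (by
    have := Int.eq_zero_of_abs_lt_dvd h (by rw [abs_lt]; omega)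
    omega)
  have h := cos_two_pi_mul_div_le n _ hndvd
  rwa [show 2 * π * ((u - w : ℤ) : ℝ) / n = scafAngle n u - scafAngle n w by
    simp only [scafAngle]; push_cast; ring] at h

lemma inner_constrPt (n k : ℕ) (a : EuclideanSpace ℝ (Fin (2 * k))) (i j : Fin k) (u v : ℕ) :
    ⟪a, constrPt n k i j u v⟫ = ((⟪a, scafPt n k i u⟫ + ⟪a, scafPt n k i (almostAntip n u)⟫)
      + (⟪a, scafPt n k j v⟫ + ⟪a, scafPt n k j (almostAntip n v)⟫)) / 4 := by
  rw [constrPt, real_inner_smul_right, inner_add_right, inner_add_right, inner_add_right]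
  ring

lemma exists_independent_of_separatedBy {n k : ℕ} (hn : 0 < n) (hneven : Even n)
    {Adj : ℕ → ℕ → Prop} (hsym : ∀ u v, Adj u v → Adj v u)
    {a₁ a₂ : EuclideanSpace ℝ (Fin (2 * k))} {b₁ b₂ : ℝ} (hb₁ : 0 < b₁) (hb₂ : 0 < b₂)
    (hS : SeparatedBy (scafSet n k) (constrSet n k Adj) a₁ a₂ b₁ b₂) :
    ∃ f : Fin k → ℕ, (∀ m, f m ∈ Finset.Icc 1 n) ∧ Function.Injective f ∧
      ∀ m m' : Fin k, m ≠ m' → ¬Adj (f m) (f m') := by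
  have h0 : (0 : EuclideanSpace ℝ (Fin (2 * k))) ∈ constrSet n k Adj := Set.mem_insert _ _
  have hP : ∀ i, ∀ u ∈ Finset.Icc 1 n, scafPt n k i u ∈ scafSet n k :=
    fun i u hu => ⟨i, u, hu, rfl⟩
  have hnegP : ∀ i, ∀ u ∈ Finset.Icc 1 n, -scafPt n k i u ∈ scafSet n k := fun i u hu => by
    rw [← scafPt_antip k hn hneven i (Finset.mem_Icc.mp hu).1]
    exact hP i _ (antip_mem hn u)
  have hbelow : ∀ i, ∀ u ∈ Finset.Icc 1 n, b₁ < ⟪a₁, scafPt n k i u⟫ → ⟪a₂, scafPt n k i u⟫ < b₂ :=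
    fun i u hu => hS.inner_lt_of_lt_inner hb₁ hb₂ h0 (hP i u hu) (hnegP i u hu)
  choose f hf hfu hfv using fun i =>
    exists_almostAntip_pair hn hneven (fun u => b₁ < ⟪a₁, scafPt n k i u⟫) fun u hu => by
      rw [scafPt_antip k hn hneven i (Finset.mem_Icc.mp hu).1]
      exact hS.lt_inner_neg_iff hb₁ hb₂ h0 (hP i u hu) (hnegP i u hu)
  -- `p_{i,f i}` and the centroid `q_{ij}^{f i, f j}` lie on the same side of both hyperplanes
  have hfar : ∀ i j, constrPt n k i j (f i) (f j) ∉ constrSet n k Adj := by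
    intro i j
    have hi := hbelow i _ (hf i) (hfu i)
    have hi' := hbelow i _ (almostAntip_mem hn _) (hfv i)
    have hj := hbelow j _ (hf j) (hfu j)
    have hj' := hbelow j _ (almostAntip_mem hn _) (hfv j)
    refine hS.notMem_of_lt_inner_of_inner_lt (hP i _ (hf i)) (hfu i) ?_ hi ?_ <;>
      rw [inner_constrPt] <;> linarith [hfu i, hfv i, hfu j, hfv j]
  have hpair : ∀ i j, i < j → f i ≠ f j ∧ ¬Adj (f i) (f j) := fun i j hij =>
    ⟨fun h => hfar i j (Or.inr (Or.inl ⟨i, j, hij, f i, hf i, by rw [h]⟩)),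
      fun h => hfar i j (Or.inr (Or.inr ⟨i, j, hij, f i, f j, h, rfl⟩))⟩
  refine ⟨f, hf, fun m m' h => ?_, fun m m' hne h => ?_⟩
  · by_contra hne
    rcases lt_or_gt_of_ne hne with hlt | hlt
    · exact (hpair _ _ hlt).1 h
    · exact (hpair _ _ hlt).1 h.symm
  · rcases lt_or_gt_of_ne hne with hlt | hlt
    · exact (hpair _ _ hlt).2 h
    · exact (hpair _ _ hlt).2 (hsym _ _ h)

noncomputable def angleVec (k : ℕ) (ψ : Fin k → ℝ) : EuclideanSpace ℝ (Fin (2 * k)) :=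
  WithLp.toLp 2 fun idx =>
    if (idx : ℕ) % 2 = 0 then Real.cos (ψ ⟨idx / 2, by omega⟩) else Real.sin (ψ ⟨idx / 2, by omega⟩)

lemma inner_angleVec_scafPt (n k : ℕ) (ψ : Fin k → ℝ) (i : Fin k) (u : ℕ) :
    ⟪angleVec k ψ, scafPt n k i u⟫ = Real.cos (scafAngle n u - ψ i) := by
  have h₀ : (⟨(2 * i) / 2, by omega⟩ : Fin k) = i := Fin.ext (by simp)
  have h₁ : (⟨(2 * i + 1) / 2, by omega⟩ : Fin k) = i := Fin.ext (by simp; omega)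
  rw [inner_scafPt, Real.cos_sub]
  simp only [angleVec, Nat.mul_mod_right, Nat.mul_add_mod_self_left, if_true, h₀, h₁]
  norm_num
  ring

-- The `i`-th pair of this normal is perpendicular to the bisector of `p_{i,f i}` and
-- `p_{i,f i + 1}`, so its inner products with `P` are `± sin` of odd multiples of `π/n`.
noncomputable def indepNormal (n k : ℕ) (f : Fin k → ℕ) : EuclideanSpace ℝ (Fin (2 * k)) :=
  angleVec k fun i => scafAngle n (f i) - π / 2 + π / n

section IndepNormal

variable {n k : ℕ} (f : Fin k → ℕ)

lemma sin_pi_div_le_abs_inner_indepNormal (hn : 0 < n) (hneven : Even n) (i : Fin k) (t : ℕ) :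
    Real.sin (π / n) ≤ |⟪indepNormal n k f, scafPt n k i t⟫| := by
  set m : ℤ := 2 * ((t : ℤ) - f i) - 1
  have hm : ¬(n : ℤ) ∣ m := fun h => by
    have : (2 : ℤ) ∣ m := (even_iff_two_dvd.mp (by exact_mod_cast hneven : Even (n : ℤ))).trans h
    omega
  have hangle : scafAngle n t - (scafAngle n (f i) - π / 2 + π / n) = π * m / n + π / 2 := by
    simp only [scafAngle, m]
    push_cast
    ring
  have hsin := sin_pi_div_nonneg hn
  rw [indepNormal, inner_angleVec_scafPt, hangle, Real.cos_add_pi_div_two, abs_neg,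
    ← abs_of_nonneg hsin]
  exact abs_sin_pi_div_le n m hm

lemma inner_indepNormal_scafPt_add (hn : 0 < n) (hneven : Even n) (i : Fin k) {u : ℕ}
    (hu : 1 ≤ u) :
    ⟪indepNormal n k f, scafPt n k i u⟫ + ⟪indepNormal n k f, scafPt n k i (almostAntip n u)⟫
      = 2 * Real.sin (π / n) * Real.cos (scafAngle n u - scafAngle n (f i)) := by
  obtain ⟨c, hc⟩ := scafAngle_almostAntip hn hneven hu
  set y := scafAngle n u - scafAngle n (f i)
  have h₁ : scafAngle n u - (scafAngle n (f i) - π / 2 + π / n) = (y + π / 2) - π / n := by ring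
  have h₂ : scafAngle n (almostAntip n u) - (scafAngle n (f i) - π / 2 + π / n)
      = ((y + π / 2) + π / n + π) + c * (2 * π) := by rw [hc]; ring
  rw [indepNormal, inner_angleVec_scafPt, inner_angleVec_scafPt, h₁, h₂,
    Real.cos_add_int_mul_two_pi, Real.cos_add_pi, Real.cos_sub (y + π / 2),
    Real.cos_add (y + π / 2), Real.sin_add_pi_div_two]
  ring

lemma abs_inner_indepNormal_constrPt_le (hn : 0 < n) (hneven : Even n) (i j : Fin k)
    {u v : ℕ} (hu : u ∈ Finset.Icc 1 n) (hv : v ∈ Finset.Icc 1 n) (hfi : f i ∈ Finset.Icc 1 n)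
    (hfj : f j ∈ Finset.Icc 1 n) (hne : ¬(u = f i ∧ v = f j))
    (hne' : ¬(u = antip n (f i) ∧ v = antip n (f j))) :
    |⟪indepNormal n k f, constrPt n k i j u v⟫|
      ≤ Real.sin (π / n) * (1 + Real.cos (2 * π / n)) / 2 := by
  have hsin := sin_pi_div_nonneg hn
  set α := Real.cos (scafAngle n u - scafAngle n (f i))
  set β := Real.cos (scafAngle n v - scafAngle n (f j))
  set c := Real.cos (2 * π / n)
  have hα := Real.cos_le_one (scafAngle n u - scafAngle n (f i))
  have hβ := Real.cos_le_one (scafAngle n v - scafAngle n (f j))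
  have hα' := Real.neg_one_le_cos (scafAngle n u - scafAngle n (f i))
  have hβ' := Real.neg_one_le_cos (scafAngle n v - scafAngle n (f j))
  have hup : α ≤ c ∨ β ≤ c := by
    by_cases h : u = f i
    · exact Or.inr (cos_sub_scafAngle_le hv hfj fun h' => hne ⟨h, h'⟩)
    · exact Or.inl (cos_sub_scafAngle_le hu hfi h)
  have hlow : -c ≤ α ∨ -c ≤ β := by
    have hanti : ∀ {w x}, w ∈ Finset.Icc 1 n → x ∈ Finset.Icc 1 n → w ≠ antip n x →
        -c ≤ Real.cos (scafAngle n w - scafAngle n x) := fun hw hx h => by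
      have := cos_sub_scafAngle_le hw (antip_mem hn _) h
      rw [cos_sub_scafAngle_antip hn hneven _ (Finset.mem_Icc.mp hx).1] at this
      linarith
    by_cases h : u = antip n (f i)
    · exact Or.inr (hanti hv hfj fun h' => hne' ⟨h, h'⟩)
    · exact Or.inl (hanti hu hfi h)
  have hsum : |α + β| ≤ 1 + c := abs_le.mpr
    ⟨by rcases hlow with h | h <;> linarith, by rcases hup with h | h <;> linarith⟩
  rw [inner_constrPt, inner_indepNormal_scafPt_add f hn hneven i (Finset.mem_Icc.mp hu).1,
    inner_indepNormal_scafPt_add f hn hneven j (Finset.mem_Icc.mp hv).1,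
    show (2 * Real.sin (π / n) * α + 2 * Real.sin (π / n) * β) / 4
      = Real.sin (π / n) / 2 * (α + β) by ring, abs_mul, abs_of_nonneg (by positivity)]
  calc Real.sin (π / n) / 2 * |α + β| ≤ Real.sin (π / n) / 2 * (1 + c) := by gcongr
    _ = _ := by ring

end IndepNormal

lemma exists_separatedBy_of_independent {n k : ℕ} (hn : 4 ≤ n) (hneven : Even n) (hk : 1 ≤ k)
    {Adj : ℕ → ℕ → Prop} (hsupp : ∀ u v, Adj u v → u ∈ Finset.Icc 1 n ∧ v ∈ Finset.Icc 1 n)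
    (hinv : ∀ u ∈ Finset.Icc 1 n, ∀ v ∈ Finset.Icc 1 n,
      (Adj u v ↔ Adj (antip n u) (antip n v)))
    (f : Fin k → ℕ) (hf : ∀ m, f m ∈ Finset.Icc 1 n) (hinj : Function.Injective f)
    (hind : ∀ m m' : Fin k, m ≠ m' → ¬Adj (f m) (f m')) :
    ∃ (a₁ a₂ : EuclideanSpace ℝ (Fin (2 * k))) (b₁ b₂ : ℝ), a₁ ≠ 0 ∧ a₂ ≠ 0 ∧
      SeparatedBy (scafSet n k) (constrSet n k Adj) a₁ a₂ b₁ b₂ := by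
  have hn0 : 0 < n := by omega
  have hn4 : (4 : ℝ) ≤ n := by exact_mod_cast hn
  set s := Real.sin (π / n)
  set c := Real.cos (2 * π / n)
  have hs : 0 < s := Real.sin_pos_of_pos_of_lt_pi (by positivity)
    (by rw [div_lt_iff₀ (by positivity)]; nlinarith [Real.pi_pos])
  have hc : c < 1 := by
    have := Real.cos_lt_cos_of_nonneg_of_le_pi le_rfl
      (by rw [div_le_iff₀ (by positivity)]; nlinarith [Real.pi_pos]) (by positivity : 0 < 2 * π / n)
    rwa [Real.cos_zero] at this
  obtain ⟨b, hlt, hbs⟩ : ∃ b, s * (1 + c) / 2 < b ∧ b < s :=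
    exists_between (by nlinarith [mul_pos hs (sub_pos.mpr hc)])
  have hb : 0 < b := lt_of_le_of_lt
    (div_nonneg (mul_nonneg hs.le (by linarith [Real.neg_one_le_cos (2 * π / n)])) two_pos.le) hlt
  have hQ : ∀ q ∈ constrSet n k Adj, |⟪indepNormal n k f, q⟫| < b := by
    have hbound := fun i j {u v} hu hv hne hne' =>
      (abs_inner_indepNormal_constrPt_le f hn0 hneven i j (u := u) (v := v) hu hv (hf i) (hf j)
        hne hne').trans_lt hlt
    rintro q (rfl | ⟨i, j, hij, u, hu, rfl⟩ | ⟨i, j, hij, u, v, hadj, rfl⟩)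
    · rwa [inner_zero_right, abs_zero]
    · refine hbound i j hu hu ?_ ?_ <;> rintro ⟨rfl, h⟩ <;> apply hij.ne <;> apply hinj
      · exact h
      · rw [← antip_antip hneven (hf i), h, antip_antip hneven (hf j)]
    · obtain ⟨hu, hv⟩ := hsupp u v hadj
      refine hbound i j hu hv ?_ ?_ <;> rintro ⟨rfl, rfl⟩ <;> apply hind i j hij.ne
      · exact hadj
      · exact (hinv _ (hf i) _ (hf j)).mpr hadj
  have hP : ∀ p ∈ scafSet n k, b < |⟪indepNormal n k f, p⟫| := by
    rintro _ ⟨i, t, -, rfl⟩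
    exact hbs.trans_le (sin_pi_div_le_abs_inner_indepNormal f hn0 hneven i t)
  have hN : indepNormal n k f ≠ 0 := fun h => by
    have := hP _ ⟨⟨0, hk⟩, 1, Finset.mem_Icc.mpr ⟨le_rfl, by omega⟩, rfl⟩
    rw [h, inner_zero_left, abs_zero] at this
    linarith
  exact ⟨_, _, b, b, hN, neg_ne_zero.mpr hN, separatedBy_slab hb.le hP hQ⟩

theorem two_hyperplane_separation_iff_independent_set_general (n k : ℕ) (hn : 4 ≤ n)
    (hneven : Even n) (hk : 1 ≤ k) (Adj : ℕ → ℕ → Prop)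
    (hsym : ∀ u v, Adj u v → Adj v u)
    (hsupp : ∀ u v, Adj u v → u ∈ Finset.Icc 1 n ∧ v ∈ Finset.Icc 1 n)
    (hinv : ∀ u ∈ Finset.Icc 1 n, ∀ v ∈ Finset.Icc 1 n,
      (Adj u v ↔ Adj (antip n u) (antip n v))) :
    (∃ (a₁ a₂ : EuclideanSpace ℝ (Fin (2 * k))) (b₁ b₂ : ℝ), a₁ ≠ 0 ∧ a₂ ≠ 0 ∧
      (∀ x ∈ scafSet n k ∪ constrSet n k Adj, x ∉ hyp a₁ b₁ ∪ hyp a₂ b₂) ∧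
      (∀ p ∈ scafSet n k, ∀ q ∈ constrSet n k Adj,
        (segment ℝ p q ∩ (hyp a₁ b₁ ∪ hyp a₂ b₂)).Nonempty))
    ↔ (∃ f : Fin k → ℕ, (∀ m, f m ∈ Finset.Icc 1 n) ∧ Function.Injective f ∧
        ∀ m m' : Fin k, m ≠ m' → ¬Adj (f m) (f m')) := by
  constructor
  · rintro ⟨a₁, a₂, b₁, b₂, -, -, hS⟩
    obtain ⟨a₁', a₂', b₁', b₂', hb₁, hb₂, hS'⟩ := SeparatedBy.exists_pos hS (Set.mem_insert _ _)
    exact exists_independent_of_separatedBy (by omega) hneven hsym hb₁ hb₂ hS'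
  · rintro ⟨f, hf, hinj, hind⟩
    exact exists_separatedBy_of_independent hn hneven hk hsupp hinv f hf hinj hind

/-- For a graph `G` on `{1,…,n}` whose adjacency is invariant under `u ↦ u'` on both
endpoints, the sets `P` and `Q` can be separated by two hyperplanes (each separating
segment between a point of `P` and a point of `Q` meets one of the two hyperplanes,
and no point of `P ∪ Q` lies on either hyperplane) iff `G` has an independent set of
size `k`. -/
theorem two_hyperplane_separation_iff_independent_set (n k : ℕ) (hn : 4 ≤ n)
    (hneven : Even n) (hk : 1 ≤ k) (Adj : ℕ → ℕ → Prop)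
    (hsym : ∀ u v, Adj u v → Adj v u) (hirr : ∀ u, ¬Adj u u)
    (hsupp : ∀ u v, Adj u v → u ∈ Finset.Icc 1 n ∧ v ∈ Finset.Icc 1 n)
    (hinv : ∀ u ∈ Finset.Icc 1 n, ∀ v ∈ Finset.Icc 1 n,
      (Adj u v ↔ Adj (antip n u) (antip n v))) :
    (∃ (a₁ a₂ : EuclideanSpace ℝ (Fin (2 * k))) (b₁ b₂ : ℝ), a₁ ≠ 0 ∧ a₂ ≠ 0 ∧
      (∀ x ∈ scafSet n k ∪ constrSet n k Adj, x ∉ hyp a₁ b₁ ∪ hyp a₂ b₂) ∧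
      (∀ p ∈ scafSet n k, ∀ q ∈ constrSet n k Adj,
        (segment ℝ p q ∩ (hyp a₁ b₁ ∪ hyp a₂ b₂)).Nonempty))
    ↔ (∃ f : Fin k → ℕ, (∀ m, f m ∈ Finset.Icc 1 n) ∧ Function.Injective f ∧
        ∀ m m' : Fin k, m ≠ m' → ¬Adj (f m) (f m')) :=
  two_hyperplane_separation_iff_independent_set_general n k hn hneven hk Adj hsym hsupp hinv
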